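/- arXiv:1906.11639 — 2 statements merged into one kernel-verified Lean document; each statement's English description precedes it below -/
import Mathlib

section
/- Let S(q) be the objective and suppose (U*, q*) is optimal for Problem P2: maximize S(q,U)/(C₀ + C₁·Σ_k q_k) subject to per-user constraints 0 ≤ q_k ≤ p_max^(k) and rate constraints, with C₀, C₁ > 0. Then setting ν = (Σ_k q*_k)/(Σ_k p_max^(k)) yields a feasible point of Problem P3 (which maximizes S(q,U)/(C₀ + C₁·ν·Σ_k p_max^(k)) subject to the additional constraints Σ_k q_k ≤ ν Σ_k p_max^(k) and ν* ≤ ν ≤ 1) achieving the same objective value; conversely any optimal solution of P3 satisfies Σ_k q̃_k = ν̃ Σ_k p_max^(k) and is feasible for P2 with the same objective value. Hence P2 and P3 have equal optimal values. -/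
open Finset

/-- Theorem 2 of the paper: the energy-efficiency problem P2 (objective
`S(q,u)/(C₀ + C₁·Σ q_k)`) and the reformulated problem P3 (objective
`S(q,u)/(C₀ + C₁·ν·Σ p_max)` with the extra constraints
`Σ q_k ≤ ν·Σ p_max`, `ν* ≤ ν ≤ 1`) have the same optimal value: an optimum of
P2 gives a feasible point of P3 with the same objective (taking
`ν = Σ q*_k / Σ p_max`), any optimum of P3 is tight (`Σ q̃_k = ν̃·Σ p_max`) and
feasible for P2 with the same objective, and the two optimal values coincide. -/
theorem stmt_15 {U : Type*} {K : ℕ}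
    (S : (Fin K → ℝ) → U → ℝ) (Feas : (Fin K → ℝ) → U → Prop)
    (pmax : Fin K → ℝ) (C₀ C₁ νstar : ℝ)
    (hC₀ : 0 < C₀) (hC₁ : 0 < C₁) (hpmax : 0 < ∑ k, pmax k)
    (hS : ∀ q u, Feas q u → 0 < S q u)
    -- ν* comes from the power-minimization problem: every point satisfying the
    -- rate constraints and power bounds uses at least total power ν*·Σ p_max
    (hνstar : ∀ q u, Feas q u → (∀ k, 0 ≤ q k ∧ q k ≤ pmax k) →
      νstar * ∑ k, pmax k ≤ ∑ k, q k)
    -- optimal solution of P2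
    (qstar : Fin K → ℝ) (ustar : U)
    (hfeas2 : Feas qstar ustar ∧ ∀ k, 0 ≤ qstar k ∧ qstar k ≤ pmax k)
    (hopt2 : ∀ q u, Feas q u → (∀ k, 0 ≤ q k ∧ q k ≤ pmax k) →
      S q u / (C₀ + C₁ * ∑ k, q k) ≤ S qstar ustar / (C₀ + C₁ * ∑ k, qstar k))
    -- optimal solution of P3
    (qt : Fin K → ℝ) (ut : U) (νt : ℝ)
    (hfeas3 : Feas qt ut ∧ (∀ k, 0 ≤ qt k ∧ qt k ≤ pmax k) ∧
      (∑ k, qt k) ≤ νt * ∑ k, pmax k ∧ νstar ≤ νt ∧ νt ≤ 1)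
    (hopt3 : ∀ q u (ν : ℝ), Feas q u → (∀ k, 0 ≤ q k ∧ q k ≤ pmax k) →
      (∑ k, q k) ≤ ν * ∑ k, pmax k → νstar ≤ ν → ν ≤ 1 →
      S q u / (C₀ + C₁ * ν * ∑ k, pmax k)
        ≤ S qt ut / (C₀ + C₁ * νt * ∑ k, pmax k)) :
    -- (i) the P2 optimum yields a feasible point of P3 with the same objective
    ((∑ k, qstar k) ≤ ((∑ k, qstar k) / ∑ k, pmax k) * ∑ k, pmax k ∧
      νstar ≤ (∑ k, qstar k) / ∑ k, pmax k ∧ (∑ k, qstar k) / ∑ k, pmax k ≤ 1 ∧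
      S qstar ustar / (C₀ + C₁ * ((∑ k, qstar k) / ∑ k, pmax k) * ∑ k, pmax k)
        = S qstar ustar / (C₀ + C₁ * ∑ k, qstar k)) ∧
    -- (ii) the P3 optimum is tight and feasible for P2 with the same objective
    ((∑ k, qt k) = νt * ∑ k, pmax k ∧
      S qt ut / (C₀ + C₁ * ∑ k, qt k)
        = S qt ut / (C₀ + C₁ * νt * ∑ k, pmax k)) ∧
    -- (iii) the optimal values of P2 and P3 are equal
    S qstar ustar / (C₀ + C₁ * ∑ k, qstar k)
      = S qt ut / (C₀ + C₁ * νt * ∑ k, pmax k) := by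

  obtain ⟨hf2, hb2⟩ := hfeas2
  obtain ⟨hf3, hb3, ht3, hν1, hν2⟩ := hfeas3
  have hP : (0:ℝ) < ∑ k, pmax k := hpmax
  have hPne : (∑ k, pmax k) ≠ 0 := ne_of_gt hP
  have hQs0 : 0 ≤ ∑ k, qstar k := Finset.sum_nonneg fun k _ => (hb2 k).1
  have hQsP : ∑ k, qstar k ≤ ∑ k, pmax k := Finset.sum_le_sum fun k _ => (hb2 k).2
  have hQt0 : 0 ≤ ∑ k, qt k := Finset.sum_nonneg fun k _ => (hb3 k).1
  set ν : ℝ := (∑ k, qstar k) / ∑ k, pmax k with hν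
  have htight : ν * ∑ k, pmax k = ∑ k, qstar k := div_mul_cancel₀ _ hPne
  have hνs : νstar ≤ ν := by
    rw [hν, le_div_iff₀ hP]
    exact hνstar qstar ustar hf2 hb2
  have hνle1 : ν ≤ 1 := by
    rw [hν, div_le_one hP]; exact hQsP
  have hobjeq : S qstar ustar / (C₀ + C₁ * ν * ∑ k, pmax k)
      = S qstar ustar / (C₀ + C₁ * ∑ k, qstar k) := by
    rw [mul_assoc, htight]
  have hi : (∑ k, qstar k) ≤ ν * ∑ k, pmax k ∧ νstar ≤ ν ∧ ν ≤ 1 ∧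
      S qstar ustar / (C₀ + C₁ * ν * ∑ k, pmax k)
        = S qstar ustar / (C₀ + C₁ * ∑ k, qstar k) :=
    ⟨htight.ge, hνs, hνle1, hobjeq⟩
  -- tightness of the P3 optimum
  have hνt0 : 0 ≤ νt := by
    nlinarith [ht3]
  have hden3 : 0 < C₀ + C₁ * νt * ∑ k, pmax k := by positivity
  have htight3 : ∑ k, qt k = νt * ∑ k, pmax k := by
    by_contra hne
    have hlt : ∑ k, qt k < νt * ∑ k, pmax k := lt_of_le_of_ne ht3 hne
    set ν' : ℝ := (∑ k, qt k) / ∑ k, pmax k with hν'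
    have htight' : ν' * ∑ k, pmax k = ∑ k, qt k := div_mul_cancel₀ _ hPne
    have hν's : νstar ≤ ν' := by
      rw [hν', le_div_iff₀ hP]; exact hνstar qt ut hf3 hb3
    have hν'lt : ν' < νt := by
      rw [hν', div_lt_iff₀ hP]; exact hlt
    have hν'1 : ν' ≤ 1 := hν'lt.le.trans hν2
    have hle := hopt3 qt ut ν' hf3 hb3 htight'.ge hν's hν'1
    have hden' : 0 < C₀ + C₁ * ν' * ∑ k, pmax k := by
      have : 0 ≤ ν' := by rw [hν']; positivity
      positivity
    have hSpos := hS qt ut hf3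
    have : S qt ut / (C₀ + C₁ * νt * ∑ k, pmax k)
        < S qt ut / (C₀ + C₁ * ν' * ∑ k, pmax k) := by
      apply div_lt_div_of_pos_left hSpos hden'
      nlinarith
    linarith
  have hobjeq3 : S qt ut / (C₀ + C₁ * ∑ k, qt k)
      = S qt ut / (C₀ + C₁ * νt * ∑ k, pmax k) := by
    rw [htight3, mul_assoc]
  -- equality of optimal values
  have h1 : S qstar ustar / (C₀ + C₁ * ∑ k, qstar k)
      ≤ S qt ut / (C₀ + C₁ * νt * ∑ k, pmax k) := by
    calc S qstar ustar / (C₀ + C₁ * ∑ k, qstar k)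
        = S qstar ustar / (C₀ + C₁ * ν * ∑ k, pmax k) := hobjeq.symm
      _ ≤ _ := hopt3 qstar ustar ν hf2 hb2 htight.ge hνs hνle1
  have h2 : S qt ut / (C₀ + C₁ * νt * ∑ k, pmax k)
      ≤ S qstar ustar / (C₀ + C₁ * ∑ k, qstar k) := by
    calc S qt ut / (C₀ + C₁ * νt * ∑ k, pmax k)
        = S qt ut / (C₀ + C₁ * ∑ k, qt k) := hobjeq3.symm
      _ ≤ _ := hopt2 qt ut hf3 hb3
  exact ⟨hi, ⟨htight3, hobjeq3⟩, le_antisymm h1 h2⟩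
end

section
/- At an optimal solution (q̃, Ũ, ν̃) of Problem P3, the auxiliary variable is tight: Σ_k q̃_k = ν̃ · Σ_k p_max^(k). -/
open Finset

theorem strictAntiOn_div_affine {S C₀ C₁ P : ℝ} (hS : 0 < S) (hC₀ : 0 < C₀) (hC₁ : 0 < C₁)
    (hP : 0 < P) : StrictAntiOn (fun ν => S / (C₀ + C₁ * ν * P)) (Set.Ici 0) := by
  intro a (ha : 0 ≤ a) b _ hab
  have hden : C₀ + C₁ * a * P < C₀ + C₁ * b * P := by gcongr
  exact div_lt_div_of_pos_left hS (by positivity) hden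

/- Lowering `ν` to the tight level `ν' = Σ q̃ / Σ p_max` keeps the point feasible and,
the denominator being increasing in `ν`, can only raise the objective. -/
/-- Tightness of the auxiliary variable in Problem P3: at an optimal solution
`(q̃, ũ, ν̃)` of P3, the total-power constraint is tight,
`Σ_k q̃_k = ν̃ · Σ_k p_max^(k)`. -/
theorem stmt_16 {U : Type*} {K : ℕ}
    (S : (Fin K → ℝ) → U → ℝ) (Feas : (Fin K → ℝ) → U → Prop)
    (pmax : Fin K → ℝ) (C₀ C₁ νstar : ℝ)
    (hC₀ : 0 < C₀) (hC₁ : 0 < C₁) (hpmax : 0 < ∑ k, pmax k)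
    (hS : ∀ q u, Feas q u → 0 < S q u)
    (hνstar : ∀ q u, Feas q u → (∀ k, 0 ≤ q k ∧ q k ≤ pmax k) →
      νstar * ∑ k, pmax k ≤ ∑ k, q k)
    (qt : Fin K → ℝ) (ut : U) (νt : ℝ)
    (hfeas3 : Feas qt ut ∧ (∀ k, 0 ≤ qt k ∧ qt k ≤ pmax k) ∧
      (∑ k, qt k) ≤ νt * ∑ k, pmax k ∧ νstar ≤ νt ∧ νt ≤ 1)
    (hopt3 : ∀ q u (ν : ℝ), Feas q u → (∀ k, 0 ≤ q k ∧ q k ≤ pmax k) →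
      (∑ k, q k) ≤ ν * ∑ k, pmax k → νstar ≤ ν → ν ≤ 1 →
      S q u / (C₀ + C₁ * ν * ∑ k, pmax k)
        ≤ S qt ut / (C₀ + C₁ * νt * ∑ k, pmax k)) :
    (∑ k, qt k) = νt * ∑ k, pmax k := by
  obtain ⟨hfeas, hbox, hle, -, hνt_le_one⟩ := hfeas3
  set P := ∑ k, pmax k
  set ν' := (∑ k, qt k) / P
  have htight : (∑ k, qt k) = ν' * P := (div_mul_cancel₀ _ hpmax.ne').symm
  have hν'_nonneg : 0 ≤ ν' := div_nonneg (sum_nonneg fun k _ => (hbox k).1) hpmax.le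
  have hν'_le : ν' ≤ νt := (div_le_iff₀ hpmax).2 hle
  have hνstar_le : νstar ≤ ν' := (le_div_iff₀ hpmax).2 (hνstar qt ut hfeas hbox)
  have hopt := hopt3 qt ut ν' hfeas hbox htight.le hνstar_le (hν'_le.trans hνt_le_one)
  have hνt_le : νt ≤ ν' :=
    ((strictAntiOn_div_affine (hS qt ut hfeas) hC₀ hC₁ hpmax).le_iff_ge
      (Set.mem_Ici.2 hν'_nonneg) (Set.mem_Ici.2 (hν'_nonneg.trans hν'_le))).1 hopt
  rw [htight, le_antisymm hν'_le hνt_le]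
end
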